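/- arXiv:1508.03954 — 2 statements merged into one kernel-verified Lean document; each statement's English description precedes it below -/
import Mathlib

section
/- Let V and W be modules over ℂ (a fine grid space V and a coarse grid space W), let I : V →ₗ[ℂ] W (injection) and P : W →ₗ[ℂ] V (prolongation) be linear maps with I ∘ P = id on W. Suppose sequences u : ℕ → V, uC : ℕ → W, sf : ℕ → V, sfC : ℕ → W, scHalf : ℕ → V, sc : ℕ → V and scC : ℕ → W satisfy, for every n ∈ ℕ: (i) sc (n+1) = scHalf (n+1) + P (scC (n+1)); (ii) u (n+1) = u n + sf (n+1) + sc (n+1); (iii) uC (n+1) = uC n + sfC (n+1) + scC (n+1); (iv) sfC (n+1) = I (sf (n+1) + scHalf (n+1)); and the initial condition uC 0 = I (u 0). Then uC n = I (u n) for every n ∈ ℕ. -/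
theorem injection_invariant_step {R V W : Type*} [Semiring R] [AddCommMonoid V] [Module R V]
    [AddCommMonoid W] [Module R W] (I : V →ₗ[R] W) (P : W →ₗ[R] V)
    (hIP : ∀ w : W, I (P w) = w) {u u' : V} {uC uC' : W} (x : V) (c : W)
    (hu : u' = u + x + P c) (huC : uC' = uC + I x + c) (h : uC = I u) :
    uC' = I u' := by
  rw [huC, hu, h, map_add, map_add, hIP]

/-- Lemma 1 of the paper: the injection invariant `uC n = I (u n)` of the
single-sweep additive FAS scheme is preserved by the pipelined updates. -/
theorem injection_invariant
    {V W : Type*} [AddCommGroup V] [Module ℂ V] [AddCommGroup W] [Module ℂ W]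
    (I : V →ₗ[ℂ] W) (P : W →ₗ[ℂ] V) (hIP : ∀ w : W, I (P w) = w)
    (u sf scHalf sc : ℕ → V) (uC sfC scC : ℕ → W)
    (hsc : ∀ n : ℕ, sc (n + 1) = scHalf (n + 1) + P (scC (n + 1)))
    (hu : ∀ n : ℕ, u (n + 1) = u n + sf (n + 1) + sc (n + 1))
    (huC : ∀ n : ℕ, uC (n + 1) = uC n + sfC (n + 1) + scC (n + 1))
    (hsfC : ∀ n : ℕ, sfC (n + 1) = I (sf (n + 1) + scHalf (n + 1)))
    (h0 : uC 0 = I (u 0)) :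
    ∀ n : ℕ, uC n = I (u n) := by
  intro n
  induction n with
  | zero => exact h0
  | succ n ih =>
    refine injection_invariant_step I P hIP (sf (n + 1) + scHalf (n + 1)) (scC (n + 1))
      ?_ (by rw [huC, hsfC]) ih
    rw [hu, hsc]
    abel
end

section
/- Fix L ∈ ℕ and a hierarchy of ℂ-modules V_0, …, V_L (level 0 coarsest, level L finest) with prolongation linear maps P_ℓ : V_{ℓ−1} →ₗ[ℂ] V_ℓ for 1 ≤ ℓ ≤ L. Let S_ℓ : V_ℓ → V_ℓ → V_ℓ be arbitrary (black-box) smoother maps, ω_ℓ ∈ ℂ relaxation scalars, and u_ℓ, b_ℓ : ℕ → V_ℓ sequences. Define corrections sc_ℓ : ℕ → V_ℓ by sc_0 (n+1) = ω_0 • S_0 (u_0 n) (b_0 n) and, for 1 ≤ ℓ ≤ L, sc_ℓ (n+1) = ω_ℓ • S_ℓ (u_ℓ n) (b_ℓ n) + P_ℓ (sc_{ℓ−1} (n+1)), and suppose the finest-level iterate satisfies u_L (n+1) = u_L n + sc_L (n+1). Then for every n, u_L (n+1) = u_L n + ∑_{ℓ=0}^{L} Q_ℓ (ω_ℓ • S_ℓ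 (u_ℓ n) (b_ℓ n)), where Q_L = id and Q_ℓ = P_L ∘ P_{L−1} ∘ ⋯ ∘ P_{ℓ+1} for ℓ < L; i.e. the finest-level update of the pipelined top-down scheme equals the update of classic additive multigrid, in which every level's damped smoother update is prolongated to the finest grid and all updates are added simultaneously. -/
theorem map_eq_sum_range_of_prolongation_recurrence {R : Type*} [Semiring R] {L : ℕ}
    {V : ℕ → Type*} [∀ ℓ, AddCommMonoid (V ℓ)] [∀ ℓ, Module R (V ℓ)]
    (P : ∀ ℓ : ℕ, V ℓ →ₗ[R] V (ℓ + 1)) (Q : ∀ ℓ : ℕ, V ℓ →ₗ[R] V L)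
    (hQ : ∀ ℓ : ℕ, ℓ < L → Q ℓ = (Q (ℓ + 1)).comp (P ℓ))
    (d x : ∀ ℓ : ℕ, V ℓ) (hx0 : x 0 = d 0)
    (hxS : ∀ ℓ : ℕ, ℓ < L → x (ℓ + 1) = d (ℓ + 1) + P ℓ (x ℓ)) :
    ∀ ℓ : ℕ, ℓ ≤ L → Q ℓ (x ℓ) = ∑ k ∈ Finset.range (ℓ + 1), Q k (d k) := by
  intro ℓ
  induction ℓ with
  | zero => simp [hx0]
  | succ m ih =>
    intro hm
    have hmL : m < L := hm
    rw [hxS m hmL, map_add, Finset.sum_range_succ, add_comm, ← ih hmL.le, hQ m hmL,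
      LinearMap.comp_apply]

/-- The paper's main theorem: the pipelined top-down FAS scheme realises
classic additive multigrid.  Here `P ℓ : V ℓ →ₗ V (ℓ+1)` are the prolongations
(`P ℓ` is the paper's `P_{ℓ+1}`), `Q ℓ = P_L ∘ ⋯ ∘ P_{ℓ+1}` (with `Q L = id`)
prolongates level `ℓ` to the finest level `L`, and the finest-level update
equals the sum of all levels' damped smoother updates prolongated to level `L`. -/
theorem additive_multigrid_equivalence
    {L : ℕ} {V : ℕ → Type*} [∀ ℓ, AddCommGroup (V ℓ)] [∀ ℓ, Module ℂ (V ℓ)]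
    (P : ∀ ℓ : ℕ, V ℓ →ₗ[ℂ] V (ℓ + 1))
    (S : ∀ ℓ : ℕ, V ℓ → V ℓ → V ℓ) (ω : ℕ → ℂ)
    (u b : ∀ ℓ : ℕ, ℕ → V ℓ) (sc : ∀ ℓ : ℕ, ℕ → V ℓ)
    (hsc0 : ∀ n : ℕ, sc 0 (n + 1) = ω 0 • S 0 (u 0 n) (b 0 n))
    (hscS : ∀ ℓ : ℕ, ℓ < L → ∀ n : ℕ,
      sc (ℓ + 1) (n + 1)
        = ω (ℓ + 1) • S (ℓ + 1) (u (ℓ + 1) n) (b (ℓ + 1) n) + P ℓ (sc ℓ (n + 1)))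
    (huL : ∀ n : ℕ, u L (n + 1) = u L n + sc L (n + 1))
    (Q : ∀ ℓ : ℕ, V ℓ →ₗ[ℂ] V L)
    (hQL : Q L = LinearMap.id)
    (hQ : ∀ ℓ : ℕ, ℓ < L → Q ℓ = (Q (ℓ + 1)).comp (P ℓ)) :
    ∀ n : ℕ,
      u L (n + 1) = u L n + ∑ ℓ ∈ Finset.range (L + 1), Q ℓ (ω ℓ • S ℓ (u ℓ n) (b ℓ n)) := by
  intro n
  have hsum := map_eq_sum_range_of_prolongation_recurrence P Q hQ
    (fun ℓ => ω ℓ • S ℓ (u ℓ n) (b ℓ n)) (fun ℓ => sc ℓ (n + 1)) (hsc0 n)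
    (fun ℓ hℓ => hscS ℓ hℓ n) L le_rfl
  rw [hQL, LinearMap.id_apply] at hsum
  rw [huL n, hsum]
end
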